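/- Let T > 0 and let y, z : [0,T] × ℝ³ → ℂ be measurable, with y(t,·) and z(t,·) differentiable on ℝ³ for almost every t. Then ‖z·conj(y)‖_{L^{4/3}(0,T;W^{1,3/2}(ℝ³))} ≤ 2 · T^{1/4} · ‖z‖_{L²(0,T;W^{1,6}(ℝ³))} · ess sup_{t∈[0,T]} ‖y(t)‖_{W^{1,2}(ℝ³)}, as an inequality of extended nonnegative reals, where ‖f‖_{L^q(0,T;W^{1,p})} := (∫₀ᵀ ‖f(t)‖_{W^{1,p}}^q dt)^{1/q}. (H¹-level bilinear estimate used for the quadratic nonlinearity in dimension d = 3.) -/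

import Mathlib

/-!
For each time `t`, the Leibniz rule `∇(z ȳ) = ȳ ∇z + z ∇ȳ`, `|∇ȳ| = |∇y|` and Hölder's inequality
with `2/3 = 1/6 + 1/2` give `‖z ȳ‖_{W^{1,3/2}} ≤ ‖z‖_{W^{1,6}} ‖y‖_{W^{1,2}}`. Bounding the last
factor by its essential supremum over `[0,T]` and comparing the `L^{4/3}` and `L²` norms on the
finite measure space `[0,T]` (Hölder again, constant `T^{1/4}`) gives the estimate.

The one delicate point is that `t ↦ ‖∇z(t)‖_{L⁶}` must be measurable for the comparison in time:
for a.e. `t`, `∇z(t, ξ)` is the pointwise limit of difference quotients of `z`, which are jointly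
measurable in `(t, ξ)`.
-/

open MeasureTheory Filter
open scoped ENNReal

/-- Sobolev `W^{1,p}` norm of a function `f : ℝ³ → ℂ`:
`‖f‖_{W^{1,p}} = ‖f‖_{L^p} + ‖∇f‖_{L^p}`, valued in `[0,∞]`. -/
noncomputable def W1Norm3 (p : ℝ≥0∞) (f : (Fin 3 → ℝ) → ℂ) : ℝ≥0∞ :=
  eLpNorm f p (volume : Measure (Fin 3 → ℝ))
    + eLpNorm (fderiv ℝ f) p (volume : Measure (Fin 3 → ℝ))

theorem eLpNorm_norm_mul_norm_le {α E F : Type*} [MeasurableSpace α] {μ : Measure α}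
    [NormedAddCommGroup E] [NormedAddCommGroup F] {p q r : ℝ≥0∞} [ENNReal.HolderTriple q r p]
    {f : α → E} {g : α → F} (hf : AEStronglyMeasurable f μ) (hg : AEStronglyMeasurable g μ) :
    eLpNorm (fun x => ‖f x‖ * ‖g x‖) p μ ≤ eLpNorm f q μ * eLpNorm g r μ := by
  simpa using eLpNorm_le_eLpNorm_mul_eLpNorm'_of_norm hf hg (fun a b => ‖a‖ * ‖b‖) 1
    (.of_forall fun _ => by simp)

theorem norm_fderiv_mul_conj_le {E : Type*} [NormedAddCommGroup E] [NormedSpace ℝ E]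
    {f g : E → ℂ} {x : E} (hf : DifferentiableAt ℝ f x) (hg : DifferentiableAt ℝ g x) :
    ‖fderiv ℝ (fun ξ => g ξ * (starRingEnd ℂ) (f ξ)) x‖
      ≤ ‖g x‖ * ‖fderiv ℝ f x‖ + ‖fderiv ℝ g x‖ * ‖f x‖ := by
  have hconj : ‖fderiv ℝ (fun ξ => (starRingEnd ℂ) (f ξ)) x‖ = ‖fderiv ℝ f x‖ := by
    simp only [starRingEnd_apply, fderiv_star]
    exact (starₗᵢ ℝ : ℂ ≃ₗᵢ⋆[ℝ] ℂ).toLinearIsometry.norm_toContinuousLinearMap_comp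
  have hf' : DifferentiableAt ℝ (fun ξ => (starRingEnd ℂ) (f ξ)) x := hf.star
  rw [fderiv_fun_mul hg hf']
  refine (norm_add_le _ _).trans_eq ?_
  rw [norm_smul, norm_smul, hconj, RCLike.norm_conj, mul_comm ‖f x‖]

theorem eLpNorm_fderiv_mul_conj_le {E : Type*} [NormedAddCommGroup E] [NormedSpace ℝ E]
    [FiniteDimensional ℝ E] [MeasurableSpace E] [BorelSpace E] {μ : Measure E}
    {p q r : ℝ≥0∞} [ENNReal.HolderTriple q r p] (hp : 1 ≤ p) {f g : E → ℂ}
    (hf : AEStronglyMeasurable f μ) (hg : AEStronglyMeasurable g μ)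
    (hdf : Differentiable ℝ f) (hdg : Differentiable ℝ g) :
    eLpNorm (fderiv ℝ (fun ξ => g ξ * (starRingEnd ℂ) (f ξ))) p μ
      ≤ eLpNorm g q μ * eLpNorm (fderiv ℝ f) r μ + eLpNorm (fderiv ℝ g) q μ * eLpNorm f r μ := by
  have hdf' : AEStronglyMeasurable (fderiv ℝ f) μ := (measurable_fderiv ℝ f).aestronglyMeasurable
  have hdg' : AEStronglyMeasurable (fderiv ℝ g) μ := (measurable_fderiv ℝ g).aestronglyMeasurable
  calc eLpNorm (fderiv ℝ (fun ξ => g ξ * (starRingEnd ℂ) (f ξ))) p μ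
      ≤ eLpNorm (fun x => ‖g x‖ * ‖fderiv ℝ f x‖ + ‖fderiv ℝ g x‖ * ‖f x‖) p μ :=
        eLpNorm_mono_real fun x => norm_fderiv_mul_conj_le (hdf x) (hdg x)
    _ ≤ eLpNorm (fun x => ‖g x‖ * ‖fderiv ℝ f x‖) p μ
          + eLpNorm (fun x => ‖fderiv ℝ g x‖ * ‖f x‖) p μ :=
        eLpNorm_add_le (hg.norm.mul hdf'.norm) (hdg'.norm.mul hf.norm) hp
    _ ≤ _ := add_le_add (eLpNorm_norm_mul_norm_le hg hdf') (eLpNorm_norm_mul_norm_le hdg' hf)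

theorem W1Norm3_mul_conj_le {p q r : ℝ≥0∞} [ENNReal.HolderTriple q r p] (hp : 1 ≤ p)
    {f g : (Fin 3 → ℝ) → ℂ} (hf : AEStronglyMeasurable f) (hg : AEStronglyMeasurable g)
    (hdf : Differentiable ℝ f) (hdg : Differentiable ℝ g) :
    W1Norm3 p (fun ξ => g ξ * (starRingEnd ℂ) (f ξ)) ≤ W1Norm3 q g * W1Norm3 r f := by
  have hprod : eLpNorm (fun ξ => g ξ * (starRingEnd ℂ) (f ξ)) p volume
      ≤ eLpNorm g q volume * eLpNorm f r volume := by
    rw [← eLpNorm_congr_norm_ae (f := fun ξ => ‖g ξ‖ * ‖f ξ‖) (.of_forall fun ξ => by simp)]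
    exact eLpNorm_norm_mul_norm_le hg hf
  have hderiv := eLpNorm_fderiv_mul_conj_le (q := q) (r := r) hp hf hg hdf hdg
  unfold W1Norm3
  calc _ ≤ _ := add_le_add hprod hderiv
    _ ≤ _ + eLpNorm (fderiv ℝ g) q volume * eLpNorm (fderiv ℝ f) r volume := le_self_add
    _ = _ := by ring

section ParametricDerivative

variable {α E F : Type*} [MeasurableSpace α]
  [NormedAddCommGroup E] [NormedSpace ℝ E] [MeasurableSpace E] [MeasurableAdd E]
  [NormedAddCommGroup F] [NormedSpace ℝ F] [MeasurableSpace F] [BorelSpace F]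
  [SecondCountableTopology F]

theorem aemeasurable_fderiv_apply_of_measurable_uncurry {ρ : Measure (α × E)} {z : α → E → F}
    (hz : Measurable (Function.uncurry z)) (hd : ∀ᵐ p ∂ρ, DifferentiableAt ℝ (z p.1) p.2)
    (v : E) :
    AEMeasurable (fun p => fderiv ℝ (z p.1) p.2 v) ρ := by
  refine aemeasurable_of_tendsto_metrizable_ae'
    (f := fun (n : ℕ) p => (n : ℝ) • (z p.1 (p.2 + (n : ℝ)⁻¹ • v) - z p.1 p.2))
    (fun n => Measurable.aemeasurable ?_) ?_
  · exact ((hz.comp (measurable_fst.prodMk (measurable_snd.add_const _))).sub hz).const_smul _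
  · filter_upwards [hd] with p hp
    exact hp.hasFDerivAt.lim v (by simpa using tendsto_natCast_atTop_atTop)

theorem aemeasurable_fderiv_of_measurable_uncurry {ι : Type*} [Fintype ι] [DecidableEq ι]
    {ρ : Measure (α × (ι → ℝ))} {z : α → (ι → ℝ) → F} (hz : Measurable (Function.uncurry z))
    (hd : ∀ᵐ p ∂ρ, DifferentiableAt ℝ (z p.1) p.2) :
    AEMeasurable (fun p => fderiv ℝ (z p.1) p.2) ρ := by
  have h := (ContinuousLinearEquiv.piRing (𝕜 := ℝ) (E := F) ι).symm.continuous.measurable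
    |>.comp_aemeasurable (aemeasurable_pi_lambda _ fun i =>
      aemeasurable_fderiv_apply_of_measurable_uncurry hz hd (Pi.single i 1))
  convert h using 2 with p
  exact ((ContinuousLinearEquiv.piRing ι).symm_apply_apply _).symm

end ParametricDerivative

theorem AEMeasurable.eLpNorm_prod_right {α β F : Type*} [MeasurableSpace α] [MeasurableSpace β]
    [NormedAddCommGroup F] [MeasurableSpace F] [OpensMeasurableSpace F]
    {μ : Measure α} {ν : Measure β} [SFinite ν] {G : α → β → F}
    (hG : AEMeasurable (Function.uncurry G) (μ.prod ν)) {p : ℝ≥0∞} (hp : p ≠ ∞) :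
    AEMeasurable (fun t => eLpNorm (G t) p ν) μ := by
  rcases eq_or_ne p 0 with rfl | hp0
  · simp
  simp_rw [eLpNorm_eq_lintegral_rpow_enorm_toReal hp0 hp]
  exact ((hG.enorm.pow_const _).lintegral_prod_right).pow_const _

theorem aemeasurable_W1Norm3 {α : Type*} [MeasurableSpace α] {μ : Measure α}
    {z : α → (Fin 3 → ℝ) → ℂ} (hz : Measurable (Function.uncurry z))
    (hd : ∀ᵐ t ∂μ, Differentiable ℝ (z t)) {p : ℝ≥0∞} (hp : p ≠ ∞) :
    AEMeasurable (fun t => W1Norm3 p (z t)) μ := by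
  have hd' : ∀ᵐ q ∂μ.prod volume, DifferentiableAt ℝ (z q.1) q.2 :=
    (Measure.quasiMeasurePreserving_fst.ae hd).mono fun q hq => hq q.2
  exact (hz.aemeasurable.eLpNorm_prod_right hp).add
    ((aemeasurable_fderiv_of_measurable_uncurry hz hd').eLpNorm_prod_right hp)

theorem lintegral_rpow_mul_const_rpow {α : Type*} [MeasurableSpace α] {μ : Measure α}
    {F : α → ℝ≥0∞} (hF : AEMeasurable F μ) (c : ℝ≥0∞) {p : ℝ} (hp : 0 < p) :
    (∫⁻ t, (F t * c) ^ p ∂μ) ^ (1 / p) = (∫⁻ t, F t ^ p ∂μ) ^ (1 / p) * c := by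
  simp_rw [ENNReal.mul_rpow_of_nonneg _ _ hp.le]
  rw [lintegral_mul_const'' _ (hF.pow_const p), ENNReal.mul_rpow_of_nonneg _ _ (by positivity),
    ← ENNReal.rpow_mul, mul_one_div_cancel hp.ne', ENNReal.rpow_one]

theorem lintegral_rpow_rpow_le_of_ae_le_mul_const {α : Type*} [MeasurableSpace α]
    {μ : Measure α} {N F : α → ℝ≥0∞} (hF : AEMeasurable F μ) {c : ℝ≥0∞}
    (hN : ∀ᵐ t ∂μ, N t ≤ F t * c) {p q : ℝ} (hp : 0 < p) (hpq : p ≤ q) :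
    (∫⁻ t, N t ^ p ∂μ) ^ (1 / p)
      ≤ μ Set.univ ^ (1 / p - 1 / q) * (∫⁻ t, F t ^ q ∂μ) ^ (1 / q) * c := by
  calc (∫⁻ t, N t ^ p ∂μ) ^ (1 / p) ≤ (∫⁻ t, (F t * c) ^ p ∂μ) ^ (1 / p) := by
        gcongr ?_ ^ _
        exact lintegral_mono_ae (hN.mono fun t ht => by gcongr)
    _ = eLpNorm' F p μ * c := lintegral_rpow_mul_const_rpow hF c hp
    _ ≤ eLpNorm' F q μ * μ Set.univ ^ (1 / p - 1 / q) * c :=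
        by gcongr; exact eLpNorm'_le_eLpNorm'_mul_rpow_measure_univ hp hpq hF.aestronglyMeasurable
    _ = _ := by rw [mul_comm (eLpNorm' F q μ)]; rfl

instance ENNReal.holderTriple_six_two_three_halves : ENNReal.HolderTriple 6 2 (3 / 2) where
  inv_add_inv_eq_inv := by
    rw [ENNReal.inv_div (by norm_num) (by norm_num),
      ← ENNReal.toReal_eq_toReal_iff' (by simp) (ENNReal.div_ne_top (by simp) (by simp))]
    simp [ENNReal.toReal_add, ENNReal.toReal_div]
    norm_num

theorem bilinear_estimate_H1_d3_general (T : ℝ) (y z : ℝ → (Fin 3 → ℝ) → ℂ)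
    (hy : Measurable (Function.uncurry y)) (hz : Measurable (Function.uncurry z))
    (hdiff : ∀ᵐ t ∂((volume : Measure ℝ).restrict (Set.Icc (0 : ℝ) T)),
      Differentiable ℝ (y t) ∧ Differentiable ℝ (z t)) :
    (∫⁻ t in Set.Icc (0 : ℝ) T,
        W1Norm3 (3 / 2 : ℝ≥0∞) (fun ξ => z t ξ * (starRingEnd ℂ) (y t ξ))
          ^ ((4 : ℝ) / 3)) ^ ((3 : ℝ) / 4)
      ≤ 2 * ENNReal.ofReal T ^ ((1 : ℝ) / 4)
          * (∫⁻ t in Set.Icc (0 : ℝ) T, W1Norm3 6 (z t) ^ ((2 : ℝ))) ^ ((1 : ℝ) / 2)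
          * essSup (fun t => W1Norm3 2 (y t))
              ((volume : Measure ℝ).restrict (Set.Icc (0 : ℝ) T)) := by
  set μ := (volume : Measure ℝ).restrict (Set.Icc (0 : ℝ) T)
  have hF : AEMeasurable (fun t => W1Norm3 6 (z t)) μ :=
    aemeasurable_W1Norm3 hz (hdiff.mono fun t ht => ht.2) (by norm_num)
  have hN : ∀ᵐ t ∂μ, W1Norm3 (3 / 2) (fun ξ => z t ξ * (starRingEnd ℂ) (y t ξ))
      ≤ W1Norm3 6 (z t) * essSup (fun t => W1Norm3 2 (y t)) μ := by
    filter_upwards [hdiff, ae_le_essSup (f := fun t => W1Norm3 2 (y t))] with t ⟨hyt, hzt⟩ hyE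
    have h32 : (1 : ℝ≥0∞) ≤ 3 / 2 := by
      rw [ENNReal.le_div_iff_mul_le (by norm_num) (by norm_num)]; norm_num
    exact (W1Norm3_mul_conj_le h32 hy.of_uncurry_left.aestronglyMeasurable
      hz.of_uncurry_left.aestronglyMeasurable hyt hzt).trans (by gcongr)
  have key := lintegral_rpow_rpow_le_of_ae_le_mul_const hF hN (p := 4 / 3) (q := 2)
    (by norm_num) (by norm_num)
  rw [Measure.restrict_apply_univ, Real.volume_Icc, sub_zero,
    show (1 : ℝ) / (4 / 3) - 1 / 2 = 1 / 4 by norm_num, show (1 : ℝ) / (4 / 3) = 3 / 4 by norm_num]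
    at key
  refine key.trans ?_
  gcongr ?_ * _ * _
  exact le_mul_of_one_le_left' one_le_two

/-- `H¹`-level bilinear estimate for the quadratic nonlinearity in dimension `d = 3`:
`‖z conj(y)‖_{L^{4/3}(0,T;W^{1,3/2})} ≤ 2 T^{1/4} ‖z‖_{L²(0,T;W^{1,6})}
  · ess sup_{t∈[0,T]} ‖y(t)‖_{W^{1,2}}`. -/
theorem bilinear_estimate_H1_d3 (T : ℝ) (hT : 0 < T) (y z : ℝ → (Fin 3 → ℝ) → ℂ)
    (hy : Measurable (Function.uncurry y)) (hz : Measurable (Function.uncurry z))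
    (hdiff : ∀ᵐ t ∂((volume : Measure ℝ).restrict (Set.Icc (0 : ℝ) T)),
      Differentiable ℝ (y t) ∧ Differentiable ℝ (z t)) :
    (∫⁻ t in Set.Icc (0 : ℝ) T,
        W1Norm3 (3 / 2 : ℝ≥0∞) (fun ξ => z t ξ * (starRingEnd ℂ) (y t ξ))
          ^ ((4 : ℝ) / 3)) ^ ((3 : ℝ) / 4)
      ≤ 2 * ENNReal.ofReal T ^ ((1 : ℝ) / 4)
          * (∫⁻ t in Set.Icc (0 : ℝ) T, W1Norm3 6 (z t) ^ ((2 : ℝ))) ^ ((1 : ℝ) / 2)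
          * essSup (fun t => W1Norm3 2 (y t))
              ((volume : Measure ℝ).restrict (Set.Icc (0 : ℝ) T)) :=
  bilinear_estimate_H1_d3_general T y z hy hz hdiff
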